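/- arXiv:1109.5437 — 13 statements merged into one kernel-verified Lean document; each statement's English description precedes it below -/
import Mathlib

section
/- Let G be a group and let 𝓗 be a collection of subgroups of G such that every nonempty intersection of n > d members of 𝓗 equals the intersection of some d of them (i.e., 𝓗 has breadth d as a set system). Then the collection of all left cosets gH with g ∈ G, H ∈ 𝓗 also has breadth d: whenever an intersection of n > d such cosets is nonempty, it equals the intersection of some d of them. -/
open Pointwise

theorem stmt0 {G : Type*} [Group G] (𝓗 : Set (Subgroup G)) (d : ℕ)
    (hbreadth : ∀ (n : ℕ), n > d → ∀ B : Fin n → Subgroup G, (∀ i, B i ∈ 𝓗) →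
      (⋂ i, (B i : Set G)).Nonempty →
      ∃ I : Finset (Fin n), I.card = d ∧ (⋂ i, (B i : Set G)) = ⋂ i ∈ I, (B i : Set G)) :
    ∀ (n : ℕ), n > d → ∀ (g : Fin n → G) (B : Fin n → Subgroup G), (∀ i, B i ∈ 𝓗) →
      (⋂ i, g i • (B i : Set G)).Nonempty →
      ∃ I : Finset (Fin n), I.card = d ∧
        (⋂ i, g i • (B i : Set G)) = ⋂ i ∈ I, g i • (B i : Set G) := by
  intro n hn g B hB ⟨x, hx⟩
  simp only [Set.mem_iInter] at hx
  have hcoset : ∀ i, g i • (B i : Set G) = x • (B i : Set G) := by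
    intro i
    have hxi : (g i)⁻¹ * x ∈ B i := by
      have := hx i
      rwa [Set.mem_smul_set_iff_inv_smul_mem] at this
    ext y
    simp only [Set.mem_smul_set_iff_inv_smul_mem, smul_eq_mul]
    constructor
    · intro h
      have : x⁻¹ * y = ((g i)⁻¹ * x)⁻¹ * ((g i)⁻¹ * y) := by group
      rw [this]; exact (B i).mul_mem (Subgroup.inv_mem _ hxi) h
    · intro h
      have : (g i)⁻¹ * y = ((g i)⁻¹ * x) * (x⁻¹ * y) := by group
      rw [this]; exact (B i).mul_mem hxi h
  have hne : (⋂ i, (B i : Set G)).Nonempty := ⟨1, Set.mem_iInter.2 fun i => (B i).one_mem⟩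
  obtain ⟨I, hI, heq⟩ := hbreadth n hn B hB hne
  refine ⟨I, hI, ?_⟩
  calc (⋂ i, g i • (B i : Set G)) = ⋂ i, x • (B i : Set G) := by
        simp only [hcoset]
    _ = x • ⋂ i, (B i : Set G) := (Set.smul_set_iInter x _).symm
    _ = x • ⋂ i ∈ I, (B i : Set G) := by rw [heq]
    _ = ⋂ i ∈ I, x • (B i : Set G) := by
        simp only [Set.smul_set_iInter]
    _ = ⋂ i ∈ I, g i • (B i : Set G) := by simp only [hcoset]
end

section
/- Let H₁ and H₂ be subgroups of a group G with H₁ ≲ H₂ (i.e., H₁ ∩ H₂ has finite index in H₁). Then for every normal subgroup H of G, H₁H ≲ H₂H. -/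
namespace Subgroup

variable {G G' : Type*} [Group G] [Group G']

theorem relIndex_map_map_dvd (f : G →* G') (H K : Subgroup G) :
    (H.map f).relIndex (K.map f) ∣ H.relIndex K := by
  rw [← relIndex_comap]
  exact relIndex_dvd_of_le_left K (le_comap_map f H)

/-- Passing to the quotient by `N` identifies `(H ⊔ N).relIndex (K ⊔ N)` with the relative index
of the images of `H` and `K` in `G ⧸ N`. -/
theorem relIndex_sup_sup_dvd (H K N : Subgroup G) [N.Normal] :
    (H ⊔ N).relIndex (K ⊔ N) ∣ H.relIndex K := by
  have h := relIndex_map_map (QuotientGroup.mk' N) H K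
  rw [QuotientGroup.ker_mk'] at h
  exact h ▸ relIndex_map_map_dvd _ H K

end Subgroup

theorem stmt2 {G : Type*} [Group G] (H₁ H₂ H : Subgroup G) [H.Normal]
    (h : H₂.relIndex H₁ ≠ 0) : (H₂ ⊔ H).relIndex (H₁ ⊔ H) ≠ 0 :=
  ne_zero_of_dvd_ne_zero h (Subgroup.relIndex_sup_sup_dvd H₂ H₁ H)
end

section
/- Let L be a modular lattice with least element 0 and greatest element 1, 0 ≠ 1. If A is a finite join-independent subset of L \ {0}, then the elements â := ⋁(A \ {a}) for a ∈ A satisfy: ⋀_{a∈A'} â = ⋁(A \ A') for every A' ⊆ A; in particular ⋀_{a∈A} â = 0 while ⋀_{a∈A'} â ≠ 0 for every proper subset A' ⊊ A. Consequently, the breadth of L is at least |A|, and hence the breadth of a modular lattice is at least its Goldie dimension. -/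
theorem stmt4 {L : Type*} [Lattice L] [BoundedOrder L] [IsModularLattice L] [DecidableEq L]
    (h01 : (⊥ : L) ≠ ⊤) (A : Finset L) (hA : ∀ a ∈ A, a ≠ ⊥)
    (hind : ∀ A' ⊆ A, ∀ a ∈ A, a ∉ A' → (A'.sup id) ⊓ a = ⊥) :
    (∀ A' ⊆ A, A'.Nonempty →
      A'.inf (fun a => (A.erase a).sup id) = (A \ A').sup id) ∧
    (A.Nonempty → A.inf (fun a => (A.erase a).sup id) = ⊥) ∧
    (∀ A' ⊂ A, A'.Nonempty → A'.inf (fun a => (A.erase a).sup id) ≠ ⊥) ∧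
    (∀ d : ℕ,
      (∀ (m : ℕ) (x : Fin m → L), m > d →
        ∃ I : Finset (Fin m), I.card = d ∧ Finset.univ.inf x = I.inf x) →
      A.card ≤ d) := by
  have key : ∀ A' ⊆ A, A'.Nonempty →
      A'.inf (fun a => (A.erase a).sup id) = (A \ A').sup id := by
    intro A'
    induction A' using Finset.cons_induction with
    | empty => intro _ h; exact absurd h (by simp)
    | cons a s ha ih =>
      intro hsub _
      have haA : a ∈ A := hsub (Finset.mem_cons_self a s)
      have hsA : s ⊆ A := fun x hx => hsub (Finset.mem_cons.2 (Or.inr hx))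
      rcases s.eq_empty_or_nonempty with rfl | hs
      · simp [Finset.sdiff_singleton_eq_erase]
      · rw [Finset.inf_cons, ih hsA hs]
        have haB : a ∈ A \ s := Finset.mem_sdiff.2 ⟨haA, ha⟩
        have hBe : A \ (Finset.cons a s ha) = (A \ s).erase a := by
          ext x
          simp [Finset.mem_sdiff, Finset.mem_erase, Finset.mem_cons]
          tauto
        rw [hBe]
        have hB : (A \ s).sup id = ((A \ s).erase a).sup id ⊔ a := by
          conv_lhs => rw [← Finset.insert_erase haB]
          rw [Finset.sup_insert]
          exact sup_comm _ _
        rw [hB]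
        have hle : ((A \ s).erase a).sup id ≤ (A.erase a).sup id :=
          Finset.sup_mono (Finset.erase_subset_erase a (Finset.sdiff_subset))
        rw [inf_comm, sup_inf_assoc_of_le _ hle]
        have h0 : a ⊓ (A.erase a).sup id = ⊥ := by
          rw [inf_comm]
          exact hind (A.erase a) (Finset.erase_subset a A) a haA (Finset.notMem_erase a A)
        rw [h0, sup_bot_eq]
  have key2 : A.Nonempty → A.inf (fun a => (A.erase a).sup id) = ⊥ := by
    intro hAne
    rw [key A (le_refl A) hAne, Finset.sdiff_self, Finset.sup_empty]
  have key3 : ∀ A' ⊂ A, A'.Nonempty → A'.inf (fun a => (A.erase a).sup id) ≠ ⊥ := by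
    intro A' hss hne
    rw [key A' hss.subset hne]
    obtain ⟨b, hbA, hbA'⟩ := Finset.exists_of_ssubset hss
    have hb : b ∈ A \ A' := Finset.mem_sdiff.2 ⟨hbA, hbA'⟩
    intro h
    exact hA b hbA (le_bot_iff.1 (h ▸ Finset.le_sup (f := id) hb))
  refine ⟨key, key2, key3, ?_⟩
  intro d hd
  by_contra hlt
  push_neg at hlt
  set m := A.card with hm
  have hAne : A.Nonempty := Finset.card_pos.1 (Nat.lt_of_le_of_lt (Nat.zero_le d) hlt)
  set f : Fin m → L := fun i => (A.equivFin.symm i : L) with hf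
  have hfinj : Function.Injective f := fun i j h => by
    apply A.equivFin.symm.injective
    exact Subtype.ext h
  have himg : Finset.univ.image f = A := by
    ext x
    simp only [Finset.mem_image, Finset.mem_univ, true_and]
    constructor
    · rintro ⟨i, rfl⟩; exact (A.equivFin.symm i).2
    · intro hx; exact ⟨A.equivFin ⟨x, hx⟩, by simp [hf]⟩
  set g : L → L := fun a => (A.erase a).sup id with hg
  set x : Fin m → L := fun i => g (f i) with hx
  have huniv : Finset.univ.inf x = A.inf g := by
    rw [← himg, Finset.inf_image]
    rfl
  obtain ⟨I, hIcard, hIinf⟩ := hd m x hlt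
  set A' : Finset L := I.image f with hA'
  have hA'card : A'.card = d := by rw [hA', Finset.card_image_of_injective _ hfinj, hIcard]
  have hA'sub : A' ⊆ A := by
    rw [hA', ← himg]
    exact Finset.image_subset_image (Finset.subset_univ I)
  have hA'ss : A' ⊂ A := lt_of_le_of_ne hA'sub (by
    intro h; rw [h] at hA'card; omega)
  have hIinf' : I.inf x = A'.inf g := by rw [hA', Finset.inf_image]; rfl
  rcases A'.eq_empty_or_nonempty with hA'e | hA'ne
  · have : I = ∅ := by
      rw [hA'] at hA'e
      exact Finset.image_eq_empty.1 hA'e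
    rw [this] at hIinf
    rw [huniv, key2 hAne] at hIinf
    simp at hIinf
    exact h01 hIinf
  · apply key3 A' hA'ss hA'ne
    rw [← hIinf', ← hIinf, huniv, key2 hAne]
end

section
/- For a meet-semilattice L, the following are equivalent definitions of breadth at most d: (i) for all x₁,…,x_{d+1}, y₁,…,y_{d+1} ∈ L with x_i ≤ y_j for all i ≠ j, there exists i with x_i ≤ y_i; (ii) for all x₁,…,x_n ∈ L with n > d there exist indices i₁,…,i_d ∈ [n] with x₁ ∧ ⋯ ∧ x_n = x_{i₁} ∧ ⋯ ∧ x_{i_d}. -/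
theorem stmt5 {L : Type*} [SemilatticeInf L] (d : ℕ) :
    (∀ x y : Fin (d + 1) → L, (∀ i j, i ≠ j → x i ≤ y j) → ∃ i, x i ≤ y i) ↔
    (∀ (n : ℕ) (x : Fin n → L), n > d →
      ∃ I : Finset (Fin n), I.card = d ∧
        ∀ z : L, (∀ i ∈ I, z ≤ x i) → ∀ j, z ≤ x j) := by
  constructor
  · intro h n x hn
    have claim : ∀ T : Finset (Fin n), T.card = d + 1 →
        ∃ i ∈ T, ∀ z : L, (∀ j ∈ T.erase i, z ≤ x j) → z ≤ x i := by
      intro T hT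
      rcases Nat.eq_zero_or_pos d with hd | hd
      · subst hd
        rw [Finset.card_eq_one] at hT
        obtain ⟨i, rfl⟩ := hT
        refine ⟨i, by simp, fun z _ => ?_⟩
        obtain ⟨k, hk⟩ := h (fun _ => z) (fun _ => x i)
          (fun a b hab => absurd (Subsingleton.elim (α := Fin 1) a b) hab)
        exact hk
      · let e := T.orderIsoOfFin hT
        have hne : ∀ k : Fin (d + 1), (T.erase (e k : Fin n)).Nonempty := by
          intro k
          rw [← Finset.card_pos, Finset.card_erase_of_mem (e k).2, hT]
          omega
        have hyp : ∀ a b : Fin (d + 1), a ≠ b →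
            (T.erase (e a : Fin n)).inf' (hne a) x ≤ x (e b) := by
          intro a b hab
          refine Finset.inf'_le _ (Finset.mem_erase.2 ⟨?_, (e b).2⟩)
          intro hh
          exact hab (e.injective (Subtype.ext hh)).symm
        obtain ⟨k, hk⟩ := h (fun k => (T.erase (e k)).inf' (hne k) x)
          (fun k => x (e k)) hyp
        refine ⟨e k, (e k).2, fun z hz => ?_⟩
        exact le_trans (Finset.le_inf' _ _ hz) hk
    have main : ∀ (k : ℕ) (S : Finset (Fin n)), S.card = d + k →
        ∃ I ⊆ S, I.card = d ∧ ∀ z : L, (∀ i ∈ I, z ≤ x i) → ∀ j ∈ S, z ≤ x j := by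
      intro k
      induction k with
      | zero => exact fun S hS => ⟨S, subset_rfl, hS, fun z hz j hj => hz j hj⟩
      | succ k ih =>
        intro S hS
        obtain ⟨T, hTS, hT⟩ := S.exists_subset_card_eq (show d + 1 ≤ S.card by omega)
        obtain ⟨i, hiT, hi⟩ := claim T hT
        obtain ⟨I, hIS, hIc, hI⟩ := ih (S.erase i)
          (by rw [Finset.card_erase_of_mem (hTS hiT)]; omega)
        refine ⟨I, hIS.trans (Finset.erase_subset _ _), hIc, fun z hz j hj => ?_⟩
        by_cases hji : j = i
        · subst hji
          refine hi z (fun j' hj' => hI z hz j' ?_)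
          exact Finset.mem_erase.2 ⟨(Finset.mem_erase.1 hj').1,
            hTS (Finset.mem_erase.1 hj').2⟩
        · exact hI z hz j (Finset.mem_erase.2 ⟨hji, hj⟩)
    obtain ⟨I, _, hIc, hI⟩ := main (n - d) Finset.univ
      (by simp only [Finset.card_univ, Fintype.card_fin]; omega)
    exact ⟨I, hIc, fun z hz j => hI z hz j (Finset.mem_univ j)⟩
  · intro h x y hxy
    obtain ⟨I, hIc, hI⟩ := h (d + 1) y (by omega)
    have hex : ∃ i : Fin (d + 1), i ∉ I := by
      by_contra hc
      push_neg at hc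
      have hu : I = Finset.univ := Finset.eq_univ_iff_forall.2 hc
      rw [hu, Finset.card_univ, Fintype.card_fin] at hIc
      omega
    obtain ⟨i, hi⟩ := hex
    exact ⟨i, hI (x i) (fun j hj => hxy i j (fun hh => hi (hh ▸ hj))) i⟩
end

section
/- If P and P' are ordered sets each possessing a greatest and a smallest element, then breadth(P × P') = breadth(P) + breadth(P'), where P × P' carries the product ordering. Moreover, if P' embeds into P as ordered sets, then breadth(P') ≤ breadth(P). -/
/-! `breadth P ≥ n` means there are `x, y : Fin n → P` with `x i ≤ y j` for `i ≠ j` but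
`x i ≰ y i`. Such witnesses for `P` and `P'` concatenate into one for `P × P'`, padding the
first block with `(⊥, ⊤)` in the second coordinate and the second block with `(⊥, ⊤)` in the
first, so breadth is superadditive. Conversely, among `a + b + 1` pairs with `x i ≰ y i` in
`P × P'`, either `a + 1` fail already in the first coordinate, or `b + 1` hold there and so fail
in the second: this pigeonhole gives subadditivity. -/

/-- Wehrung's breadth condition: `P` has breadth at most `d`. -/
def hasBreadthLE (P : Type*) [Preorder P] (d : ℕ) : Prop :=
  ∀ x y : Fin (d + 1) → P, (∀ i j, i ≠ j → x i ≤ y j) → ∃ i, x i ≤ y i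

/-- The breadth of an ordered set, as an extended natural number. -/
noncomputable def breadth (P : Type*) [Preorder P] : ℕ∞ :=
  sInf {e : ℕ∞ | ∃ d : ℕ, e = (d : ℕ∞) ∧ hasBreadthLE P d}

def HasBreadthWitness (P : Type*) [Preorder P] (n : ℕ) : Prop :=
  ∃ x y : Fin n → P, (∀ i j, i ≠ j → x i ≤ y j) ∧ ∀ i, ¬ x i ≤ y i

section Breadth

variable {P P' : Type*} [Preorder P] [Preorder P']

theorem hasBreadthLE.exists_mem_le {ι : Type*} {d : ℕ} (h : hasBreadthLE P d) {s : Finset ι}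
    (hs : d < s.card) {x y : ι → P} (hxy : ∀ i ∈ s, ∀ j ∈ s, i ≠ j → x i ≤ y j) :
    ∃ i ∈ s, x i ≤ y i := by
  obtain ⟨f⟩ : Nonempty (Fin (d + 1) ↪ s) :=
    Function.Embedding.nonempty_of_card_le (by simpa using hs)
  obtain ⟨i, hi⟩ := h (fun i => x (f i)) (fun i => y (f i))
    fun i j hij => hxy _ (f i).2 _ (f j).2 fun h => hij (f.injective (Subtype.ext h))
  exact ⟨f i, (f i).2, hi⟩

theorem hasBreadthLE.of_map_le_map_iff {f : P' → P} (hf : ∀ a b, f a ≤ f b ↔ a ≤ b) {d : ℕ}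
    (h : hasBreadthLE P d) : hasBreadthLE P' d := fun x y hxy => by
  obtain ⟨i, hi⟩ := h (f ∘ x) (f ∘ y) fun i j hij => (hf _ _).2 (hxy i j hij)
  exact ⟨i, (hf _ _).1 hi⟩

theorem coe_le_breadth_iff {n : ℕ} : (n : ℕ∞) ≤ breadth P ↔ HasBreadthWitness P n := by
  simp only [breadth, le_sInf_iff, Set.mem_ofPred_eq, forall_exists_index, and_imp]
  rw [forall_comm]
  simp only [forall_eq, Nat.cast_le]
  constructor
  · intro h
    cases n with
    | zero => exact ⟨Fin.elim0, Fin.elim0, fun i => i.elim0, fun i => i.elim0⟩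
    | succ d =>
      have hd : ¬ hasBreadthLE P d := fun hd => by simpa using h d hd
      simpa [hasBreadthLE, HasBreadthWitness] using hd
  · rintro ⟨x, y, hxy, hbad⟩ d hd
    by_contra! hdn
    obtain ⟨i, -, hi⟩ := hd.exists_mem_le (s := Finset.univ) (by simpa using hdn)
      fun i _ j _ => hxy i j
    exact hbad i hi

theorem breadth_le_coe_iff {d : ℕ} : breadth P ≤ d ↔ hasBreadthLE P d := by
  refine ⟨fun h => ?_, fun h => sInf_le ⟨d, rfl, h⟩⟩
  by_contra hd
  have : ((d + 1 : ℕ) : ℕ∞) ≤ breadth P :=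
    coe_le_breadth_iff.2 (by simpa [hasBreadthLE, HasBreadthWitness] using hd)
  exact absurd (this.trans h) (by norm_cast; omega)

theorem breadth_le_of_map_le_map_iff {f : P' → P} (hf : ∀ a b, f a ≤ f b ↔ a ≤ b) :
    breadth P' ≤ breadth P :=
  le_sInf fun _ ⟨_, he, hd⟩ => he ▸ breadth_le_coe_iff.2 (hd.of_map_le_map_iff hf)

theorem hasBreadthLE.prod {a b : ℕ} (ha : hasBreadthLE P a) (hb : hasBreadthLE P' b) :
    hasBreadthLE (P × P') (a + b) := by
  classical
  intro x y hxy
  set S := Finset.univ.filter fun i => ¬ (x i).1 ≤ (y i).1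
  have hcard : S.card + Sᶜ.card = a + b + 1 := by simp [Finset.card_add_card_compl]
  rcases lt_or_ge a S.card with hS | hS
  · obtain ⟨i, hiS, hi⟩ := ha.exists_mem_le hS fun i _ j _ hij => (hxy i j hij).1
    exact absurd hi (Finset.mem_filter.1 hiS).2
  · obtain ⟨i, hiS, hi⟩ := hb.exists_mem_le (s := Sᶜ) (by omega)
      fun i _ j _ hij => (hxy i j hij).2
    exact ⟨i, by simpa [S] using hiS, hi⟩

theorem HasBreadthWitness.prod [BoundedOrder P] [BoundedOrder P'] {m n : ℕ}
    (h : HasBreadthWitness P m) (h' : HasBreadthWitness P' n) :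
    HasBreadthWitness (P × P') (m + n) := by
  obtain ⟨x, y, hxy, hbad⟩ := h
  obtain ⟨x', y', hxy', hbad'⟩ := h'
  refine ⟨Fin.append (fun i => (x i, ⊥)) (fun j => (⊥, x' j)),
    Fin.append (fun i => (y i, ⊤)) (fun j => (⊤, y' j)), ?_, ?_⟩
  · intro i j hij
    induction i using Fin.addCases <;> induction j using Fin.addCases <;>
      simp_all [Prod.mk_le_mk, Fin.append_left, Fin.append_right]
  · intro i
    induction i using Fin.addCases <;>
      simp_all [Prod.mk_le_mk, Fin.append_left, Fin.append_right]

theorem breadth_le_breadth_prod_left [OrderBot P'] : breadth P ≤ breadth (P × P') :=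
  breadth_le_of_map_le_map_iff (f := fun p => (p, ⊥)) (by simp [Prod.mk_le_mk])

theorem breadth_le_breadth_prod_right [OrderBot P] : breadth P' ≤ breadth (P × P') :=
  breadth_le_of_map_le_map_iff (f := fun p => (⊥, p)) (by simp [Prod.mk_le_mk])

theorem breadth_prod_of_eq_coe [BoundedOrder P] [BoundedOrder P'] {a b : ℕ}
    (ha : breadth P = a) (hb : breadth P' = b) : breadth (P × P') = a + b := by
  apply le_antisymm
  · exact_mod_cast breadth_le_coe_iff.2
      ((breadth_le_coe_iff.1 ha.le).prod (breadth_le_coe_iff.1 hb.le))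
  · exact_mod_cast coe_le_breadth_iff.2
      ((coe_le_breadth_iff.1 ha.ge).prod (coe_le_breadth_iff.1 hb.ge))

end Breadth

theorem stmt6 {P P' : Type*} [PartialOrder P] [PartialOrder P']
    [BoundedOrder P] [BoundedOrder P'] :
    breadth (P × P') = breadth P + breadth P' ∧
    (∀ _ : P' ↪o P, breadth P' ≤ breadth P) := by
  refine ⟨?_, fun f => breadth_le_of_map_le_map_iff fun _ _ => f.le_iff_le⟩
  by_cases hP : breadth P = ⊤
  · rw [hP, top_add, ← top_le_iff, ← hP]
    exact breadth_le_breadth_prod_left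
  by_cases hP' : breadth P' = ⊤
  · rw [hP', add_top, ← top_le_iff, ← hP']
    exact breadth_le_breadth_prod_right
  obtain ⟨a, ha⟩ := ENat.ne_top_iff_exists.1 hP
  obtain ⟨b, hb⟩ := ENat.ne_top_iff_exists.1 hP'
  rw [← ha, ← hb]
  exact breadth_prod_of_eq_coe ha.symm hb.symm
end

section
/- For any meet-semilattice L of finite height, breadth(L) ≤ height(L), and if L has a largest element then breadth(L) < height(L). -/
private lemma lemA {L : Type*} [SemilatticeInf L] {n : ℕ} (x : Fin n → L)
    (s : Finset (Fin n)) (hs : s.Nonempty) :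
    ∃ I : Finset (Fin n), I ⊆ s ∧ ∃ hI : I.Nonempty,
      (∀ j ∈ s, I.inf' hI x ≤ x j) ∧
      ∃ C : Finset L, IsChain (· ≤ ·) (C : Set L) ∧ C.card = I.card ∧
        ∀ c ∈ C, I.inf' hI x ≤ c := by
  induction hs using Finset.Nonempty.cons_induction with
  | singleton a =>
      refine ⟨{a}, le_refl _, Finset.singleton_nonempty a, by simp, {x a},
        Set.Subsingleton.isChain (by simp), by simp, by simp⟩
  | cons a s ha hs ih =>
      obtain ⟨I, hIs, hI, hbd, C, hCchain, hCcard, hClb⟩ := ih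
      by_cases hle : I.inf' hI x ≤ x a
      · refine ⟨I, hIs.trans (Finset.subset_cons ha), hI, ?_, C, hCchain, hCcard, hClb⟩
        intro j hj
        rcases Finset.mem_cons.mp hj with rfl | hj
        · exact hle
        · exact hbd j hj
      · classical
        set m := I.inf' hI x with hm
        set m' := x a ⊓ m with hm'
        have haI : a ∉ I := fun h => ha (hIs h)
        have hm'lt : m' < m := lt_of_le_of_ne inf_le_right (fun h => hle (h ▸ inf_le_left))
        have hm'notC : m' ∉ C := fun h => absurd (hClb m' h) (not_le_of_gt hm'lt)
        have hInsNe : (insert a I).Nonempty := Finset.insert_nonempty a I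
        have hinf : (insert a I).inf' hInsNe x = m' := by simp only [hm', hm]; exact Finset.inf'_insert (H := hI) x
        refine ⟨insert a I, ?_, hInsNe, ?_, insert m' C, ?_, ?_, ?_⟩
        · exact Finset.insert_subset_iff.mpr ⟨Finset.mem_cons_self a s,
            hIs.trans (Finset.subset_cons ha)⟩
        · intro j hj
          rw [hinf]
          rcases Finset.mem_cons.mp hj with rfl | hj
          · exact inf_le_left
          · exact le_trans (le_of_lt hm'lt) (hbd j hj)
        · rw [Finset.coe_insert]
          exact hCchain.insert (fun b hb _ => Or.inl ((le_of_lt hm'lt).trans (hClb b hb)))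
        · rw [Finset.card_insert_of_notMem hm'notC, Finset.card_insert_of_notMem haI,
            hCcard]
        · intro c hc
          rw [hinf]
          rcases Finset.mem_insert.mp hc with rfl | hc
          · exact le_rfl
          · exact (le_of_lt hm'lt).trans (hClb c hc)

private lemma lemB {L : Type*} [SemilatticeInf L] [OrderTop L] {n : ℕ} (x : Fin n → L)
    (s : Finset (Fin n)) :
    ∃ I : Finset (Fin n), I ⊆ s ∧
      (∀ j ∈ s, I.inf x ≤ x j) ∧
      ∃ C : Finset L, IsChain (· ≤ ·) (C : Set L) ∧ C.card = I.card + 1 ∧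
        ∀ c ∈ C, I.inf x ≤ c := by
  classical
  induction s using Finset.induction with
  | empty =>
      exact ⟨∅, le_refl _, by simp, {⊤}, Set.Subsingleton.isChain (by simp), by simp, by simp⟩
  | @insert a s ha ih =>
      obtain ⟨I, hIs, hbd, C, hCchain, hCcard, hClb⟩ := ih
      by_cases hle : I.inf x ≤ x a
      · refine ⟨I, hIs.trans (Finset.subset_insert a s), ?_, C, hCchain, hCcard, hClb⟩
        intro j hj
        rcases Finset.mem_insert.mp hj with rfl | hj
        · exact hle
        · exact hbd j hj
      · set m := I.inf x with hm
        set m' := x a ⊓ m with hm'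
        have haI : a ∉ I := fun h => ha (hIs h)
        have hm'lt : m' < m := lt_of_le_of_ne inf_le_right (fun h => hle (h ▸ inf_le_left))
        have hm'notC : m' ∉ C := fun h => absurd (hClb m' h) (not_le_of_gt hm'lt)
        have hinf : (insert a I).inf x = m' := Finset.inf_insert
        refine ⟨insert a I, ?_, ?_, insert m' C, ?_, ?_, ?_⟩
        · exact Finset.insert_subset_iff.mpr ⟨Finset.mem_insert_self a s,
            hIs.trans (Finset.subset_insert a s)⟩
        · intro j hj
          rw [hinf]
          rcases Finset.mem_insert.mp hj with rfl | hj
          · exact inf_le_left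
          · exact le_trans (le_of_lt hm'lt) (hbd j hj)
        · rw [Finset.coe_insert]
          exact hCchain.insert (fun b hb _ => Or.inl ((le_of_lt hm'lt).trans (hClb b hb)))
        · rw [Finset.card_insert_of_notMem hm'notC, Finset.card_insert_of_notMem haI,
            hCcard]
        · intro c hc
          rw [hinf]
          rcases Finset.mem_insert.mp hc with rfl | hc
          · exact le_rfl
          · exact (le_of_lt hm'lt).trans (hClb c hc)

theorem stmt8 {L : Type*} [SemilatticeInf L] (h : ℕ)
    (hh : ∀ C : Finset L, IsChain (· ≤ ·) (C : Set L) → C.card ≤ h) :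
    (∀ (n : ℕ) (x : Fin n → L), n > h →
      ∃ I : Finset (Fin n), I.card = h ∧
        ∀ z : L, (∀ i ∈ I, z ≤ x i) → ∀ j, z ≤ x j) ∧
    (∀ _ : OrderTop L, ∀ (n : ℕ) (x : Fin n → L), n > h - 1 →
      ∃ I : Finset (Fin n), I.card = h - 1 ∧
        ∀ z : L, (∀ i ∈ I, z ≤ x i) → ∀ j, z ≤ x j) := by
  constructor
  · intro n x hn
    have hne : (Finset.univ : Finset (Fin n)).Nonempty := by
      have hpos : 0 < n := lt_of_le_of_lt (Nat.zero_le h) hn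
      exact ⟨⟨0, hpos⟩, Finset.mem_univ _⟩
    obtain ⟨I, _, hI, hbd, C, hCchain, hCcard, _⟩ := lemA x Finset.univ hne
    have hIh : I.card ≤ h := hCcard ▸ hh C hCchain
    obtain ⟨J, hIJ, hJcard⟩ := Finset.exists_superset_card_eq hIh
      (by simpa using le_of_lt hn)
    refine ⟨J, hJcard, fun z hz j => ?_⟩
    have : z ≤ I.inf' hI x := Finset.le_inf' hI x (fun i hi => hz i (hIJ hi))
    exact this.trans (hbd j (Finset.mem_univ j))
  · intro _ n x hn
    obtain ⟨I, _, hbd, C, hCchain, hCcard, _⟩ := lemB x Finset.univ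
    have hIh : I.card ≤ h - 1 := by
      have := hh C hCchain
      omega
    obtain ⟨J, hIJ, hJcard⟩ := Finset.exists_superset_card_eq hIh
      (by simpa using le_of_lt hn)
    refine ⟨J, hJcard, fun z hz j => ?_⟩
    have : z ≤ I.inf x := Finset.le_inf (fun i hi => hz i (hIJ hi))
    exact this.trans (hbd j (Finset.mem_univ j))
end

section
/- Let I = {i₁,…,iₙ} be a finite set of integers with 0 = i₀ < i₁ < ⋯ < iₙ, and let d(I) be the maximal length of a sequence 1 = j(1) < j(2) < ⋯ < j(d) ≤ n such that for each k < d, j(k+1) = j(k)+1 if i_{j(k)+1} − i_{j(k)} > 1 and j(k+1) = j(k)+2 otherwise. Then d(I) ≤ min over 0 ≤ j ≤ n of (n − j + ⌈i_j/2⌉). -/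
theorem stmt9 (n : ℕ) (i : ℕ → ℕ) (h0 : i 0 = 0) (hmono : ∀ k < n, i k < i (k + 1))
    (d : ℕ) (hd : 1 ≤ d) (j : ℕ → ℕ) (hj1 : j 1 = 1) (hjn : j d ≤ n)
    (hrec : ∀ k, 1 ≤ k → k < d →
      j (k + 1) = if 1 < i (j k + 1) - i (j k) then j k + 1 else j k + 2) :
    ∀ m ≤ n, d ≤ n - m + (i m + 1) / 2 := by
  -- i is strictly increasing on [0, n]
  have imono : ∀ a b, a ≤ b → b ≤ n → i a + (b - a) ≤ i b := by
    intro a b hab hbn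
    induction b with
    | zero =>
      have ha : a = 0 := by omega
      subst ha; omega
    | succ b ih =>
      rcases Nat.eq_or_lt_of_le hab with h | h
      · subst h; omega
      · have h1 := hmono b (by omega)
        have h2 := ih (by omega) (by omega)
        omega
  -- j increases by 1 or 2 at each step
  have jstep : ∀ k, 1 ≤ k → k < d → j k + 1 ≤ j (k + 1) ∧ j (k + 1) ≤ j k + 2 := by
    intro k h1 h2
    have hr := hrec k h1 h2
    split at hr <;> omega
  -- j is increasing
  have jmono : ∀ b, 1 ≤ b → b ≤ d → ∀ a, 1 ≤ a → a ≤ b → j a + (b - a) ≤ j b := by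
    intro b
    induction b with
    | zero => omega
    | succ b ih =>
      intro _ h2 a ha hab
      rcases Nat.eq_or_lt_of_le hab with h | h
      · subst h; omega
      · have hb1 : 1 ≤ b := by omega
        have h3 := ih hb1 (by omega) a ha (by omega)
        have h4 := (jstep b hb1 (by omega)).1
        omega
  have hjd : ∀ k, 1 ≤ k → k ≤ d → j k ≤ n := by
    intro k h1 h2
    have := jmono d hd le_rfl k h1 h2
    omega
  -- key: i (j k) ≥ 2k - 1
  have key : ∀ k, 1 ≤ k → k ≤ d → 2 * k ≤ i (j k) + 1 := by
    intro k h1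
    induction k with
    | zero => omega
    | succ k ih =>
      intro h2
      rcases Nat.eq_or_lt_of_le h1 with h | h
      · have hk0 : k = 0 := by omega
        subst hk0
        have hj1n : j 1 ≤ n := hjd 1 le_rfl hd
        have := imono 0 (j 1) (by omega) hj1n
        rw [hj1] at *
        omega
      · have hk1 : 1 ≤ k := by omega
        have ihk := ih hk1 (by omega)
        have hr := hrec k hk1 (by omega)
        have hjk1 : j (k + 1) ≤ n := hjd (k + 1) (by omega) h2
        split at hr
        · rename_i hgt
          rw [hr] at hjk1 ⊢
          omega
        · rename_i hle
          rw [hr] at hjk1 ⊢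
          have h1' := hmono (j k) (by omega)
          have h2'' : i (j k + 1) < i (j k + 2) := hmono (j k + 1) (by omega)
          omega
  intro m hm
  by_cases hm0 : m = 0
  · subst hm0
    have h1 := jmono d hd le_rfl 1 le_rfl hd
    have h2 := hjd d hd le_rfl
    rw [hj1] at h1
    omega
  · by_cases hcase : j d ≤ m
    · have h1 := key d hd le_rfl
      have h2 := imono (j d) m hcase hm
      omega
    · obtain ⟨k, hk1, hkd, hjk, hjk1⟩ : ∃ k, 1 ≤ k ∧ k < d ∧ j k ≤ m ∧ m < j (k + 1) := by
        by_contra hcon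
        push_neg at hcon
        have hall : ∀ k, 1 ≤ k → k ≤ d → j k ≤ m := by
          intro k h1
          induction k with
          | zero => omega
          | succ k ih =>
            intro h2
            rcases Nat.eq_or_lt_of_le h1 with h | h
            · have hk0 : k = 0 := by omega
              subst hk0
              rw [hj1]; omega
            · have hkk : j k ≤ m := ih (by omega) (by omega)
              have := hcon k (by omega) (by omega) hkk
              omega
        exact hcase (hall d hd le_rfl)
      have hA := key k hk1 (by omega)
      have hB := imono (j k) m hjk hm
      have hC := jmono d hd le_rfl (k + 1) (by omega) (by omega)
      have hD := hjd d hd le_rfl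
      omega
end

section
/- With d(I) defined for a finite set I = {i₁ < ⋯ < iₙ} of positive integers as the maximal length of the greedy index sequence (j(k+1) = j(k)+1 if i_{j(k)+1} − i_{j(k)} > 1 and j(k+1) = j(k)+2 otherwise, starting at j(1)=1), one has ⌈n/2⌉ ≤ d(I) ≤ min{n, ⌈iₙ/2⌉}. Moreover, d(I) = 1 if and only if n = 1, or n = 2 and i₂ = i₁ + 1. -/
/-- `j` is a valid index sequence of length `d` for the set `{i 1 < ⋯ < i n}`. -/
def ValidSeq (n : ℕ) (i : ℕ → ℕ) (d : ℕ) (j : ℕ → ℕ) : Prop :=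
  j 1 = 1 ∧ j d ≤ n ∧
    ∀ k, 1 ≤ k → k < d → j (k + 1) = if 1 < i (j k + 1) - i (j k) then j k + 1 else j k + 2

/-- `d(I)`: the maximal length of a valid index sequence. -/
noncomputable def dI (n : ℕ) (i : ℕ → ℕ) : ℕ :=
  sSup {d : ℕ | 1 ≤ d ∧ ∃ j : ℕ → ℕ, ValidSeq n i d j}

namespace Stmt10Aux

/-- one greedy step -/
def step (i : ℕ → ℕ) (m : ℕ) : ℕ := if 1 < i (m + 1) - i m then m + 1 else m + 2

/-- the canonical greedy sequence -/
def J (i : ℕ → ℕ) (k : ℕ) : ℕ := (step i)^[k - 1] 1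

lemma J_one (i : ℕ → ℕ) : J i 1 = 1 := rfl

lemma J_succ (i : ℕ → ℕ) (k : ℕ) (hk : 1 ≤ k) : J i (k + 1) = step i (J i k) := by
  obtain ⟨m, rfl⟩ := Nat.exists_eq_add_of_le hk
  show (step i)^[1 + m + 1 - 1] 1 = step i ((step i)^[1 + m - 1] 1)
  have h1 : 1 + m + 1 - 1 = m + 1 := by omega
  have h2 : 1 + m - 1 = m := by omega
  rw [h1, h2, Function.iterate_succ_apply']

lemma lt_step (i : ℕ → ℕ) (m : ℕ) : m < step i m := by
  unfold step; split <;> omega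

lemma step_le (i : ℕ → ℕ) (m : ℕ) : step i m ≤ m + 2 := by
  unfold step; split <;> omega

lemma J_mono (i : ℕ → ℕ) {k l : ℕ} (hk : 1 ≤ k) (hkl : k ≤ l) : J i k ≤ J i l := by
  induction l, hkl using Nat.le_induction with
  | base => exact le_rfl
  | succ l hl ih =>
      have := lt_step i (J i l)
      rw [J_succ i l (le_trans hk hl)]
      omega

lemma le_J (i : ℕ → ℕ) {k : ℕ} (hk : 1 ≤ k) : k ≤ J i k := by
  induction k, hk using Nat.le_induction with
  | base => exact le_refl 1
  | succ k hk ih =>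
      have := lt_step i (J i k)
      rw [J_succ i k hk]; omega

lemma J_le (i : ℕ → ℕ) {k : ℕ} (hk : 1 ≤ k) : J i k ≤ 2 * k - 1 := by
  induction k, hk using Nat.le_induction with
  | base => exact le_refl 1
  | succ k hk ih =>
      have := step_le i (J i k)
      rw [J_succ i k hk]; omega

lemma valid_eq_J {n d : ℕ} {i j : ℕ → ℕ} (h : ValidSeq n i d j) :
    ∀ k, 1 ≤ k → k ≤ d → j k = J i k := by
  obtain ⟨h1, _, hrec⟩ := h
  intro k hk
  induction k, hk using Nat.le_induction with
  | base => intro _; exact h1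
  | succ k hk ih =>
      intro hkd
      have hjk := ih (by omega)
      rw [hrec k hk (by omega), hjk, J_succ i k hk]
      rfl

lemma mem_iff {n d : ℕ} (i : ℕ → ℕ) :
    (1 ≤ d ∧ ∃ j : ℕ → ℕ, ValidSeq n i d j) ↔ (1 ≤ d ∧ J i d ≤ n) := by
  constructor
  · rintro ⟨hd, j, hj⟩
    refine ⟨hd, ?_⟩
    have := valid_eq_J hj d hd le_rfl
    have := hj.2.1
    omega
  · rintro ⟨hd, hJ⟩
    exact ⟨hd, J i, rfl, hJ, fun k hk _ => (J_succ i k hk).trans rfl⟩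

end Stmt10Aux

open Stmt10Aux in
theorem stmt10 (n : ℕ) (hn : 1 ≤ n) (i : ℕ → ℕ) (h0 : i 0 = 0)
    (hmono : ∀ k < n, i k < i (k + 1)) :
    ((n + 1) / 2 ≤ dI n i ∧ dI n i ≤ min n ((i n + 1) / 2)) ∧
    (dI n i = 1 ↔ n = 1 ∨ (n = 2 ∧ i 2 = i 1 + 1)) := by
  have hset : {d : ℕ | 1 ≤ d ∧ ∃ j : ℕ → ℕ, ValidSeq n i d j}
      = {d : ℕ | 1 ≤ d ∧ J i d ≤ n} := by
    ext d; exact mem_iff i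
  have hdI : dI n i = sSup {d : ℕ | 1 ≤ d ∧ J i d ≤ n} := by
    rw [dI, hset]
  have hbdd : BddAbove {d : ℕ | 1 ≤ d ∧ J i d ≤ n} := by
    refine ⟨n, fun d hd => ?_⟩
    have := le_J i hd.1
    exact le_trans this hd.2
  have hne : ({d : ℕ | 1 ≤ d ∧ J i d ≤ n}).Nonempty := ⟨1, le_rfl, by rw [J_one]; exact hn⟩
  have hmemS : dI n i ∈ {d : ℕ | 1 ≤ d ∧ J i d ≤ n} := by
    rw [hdI]; exact Nat.sSup_mem hne hbdd
  obtain ⟨hd1, hdn⟩ := hmemS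
  -- i is monotone on [0, n]
  have imono : ∀ b ≤ n, ∀ a ≤ b, i a ≤ i b := by
    intro b
    induction b with
    | zero => intro _ a ha; simp [Nat.le_zero.mp ha]
    | succ b ih =>
        intro hb a ha
        rcases Nat.eq_or_lt_of_le ha with rfl | h
        · exact le_rfl
        · have := ih (by omega) a (by omega)
          have := hmono b (by omega)
          omega
  -- the key growth lemma
  have igrow : ∀ k, 1 ≤ k → k ≤ dI n i → 2 * k - 1 ≤ i (J i k) := by
    intro k hk
    induction k, hk using Nat.le_induction with
    | base =>
        intro _
        rw [J_one]
        have := hmono 0 (by omega)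
        norm_num at this
        omega
    | succ k hk ih =>
        intro hkd
        have hIH := ih (by omega)
        have hJkn : J i (k + 1) ≤ n :=
          le_trans (J_mono i (by omega) hkd) hdn
        rw [J_succ i k hk] at hJkn ⊢
        unfold step at hJkn ⊢
        by_cases hgap : 1 < i (J i k + 1) - i (J i k)
        · rw [if_pos hgap] at hJkn ⊢
          omega
        · rw [if_neg hgap] at hJkn ⊢
          have h1 : i (J i k) < i (J i k + 1) := hmono _ (by omega)
          have h2 : i (J i k + 1) < i (J i k + 2) := hmono (J i k + 1) (by omega)
          omega
  constructor
  · constructor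
    · -- lower bound
      rw [hdI]
      apply le_csSup hbdd
      refine ⟨by omega, ?_⟩
      have := J_le i (k := (n + 1) / 2) (by omega)
      omega
    · -- upper bounds
      have h1 : dI n i ≤ n := le_trans (le_J i hd1) hdn
      have h2 := igrow (dI n i) hd1 le_rfl
      have h3 : i (J i (dI n i)) ≤ i n := imono n le_rfl _ hdn
      omega
  · -- the iff
    have hJ2 : J i 2 = if 1 < i 2 - i 1 then 2 else 3 := by
      rw [show (2 : ℕ) = 1 + 1 from rfl, J_succ i 1 le_rfl, J_one]; rfl
    constructor
    · intro h1
      by_contra hcon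
      push_neg at hcon
      obtain ⟨hn1, hn2⟩ := hcon
      -- n ≥ 2, and if n = 2 then i 2 ≠ i 1 + 1
      have hn2' : 2 ≤ n := by omega
      have h2mem : J i 2 ≤ n := by
        rw [hJ2]
        split <;> rename_i hgap
        · omega
        · -- gap is 1, so n = 2 is excluded only if i 2 = i 1 + 1
          have hi12 : i 1 < i 2 := hmono 1 (by omega)
          rcases Nat.lt_or_ge n 3 with h | h
          · exfalso
            have : n = 2 := by omega
            exact hn2 this (by omega)
          · omega
      have : 2 ≤ dI n i := by
        rw [hdI]; exact le_csSup hbdd ⟨by omega, h2mem⟩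
      omega
    · intro h
      have h2notin : n < J i 2 := by
        rw [hJ2]
        rcases h with rfl | ⟨rfl, hi⟩
        · split <;> omega
        · have : ¬ (1 < i 2 - i 1) := by omega
          rw [if_neg this]; omega
      have hub : ∀ d ∈ {d : ℕ | 1 ≤ d ∧ J i d ≤ n}, d ≤ 1 := by
        intro d ⟨hd, hdn'⟩
        by_contra hcon
        have : J i 2 ≤ J i d := J_mono i (by omega) (by omega)
        omega
      have := csSup_le hne hub
      rw [hdI]
      omega
end

section
/- Fix integers 0 < λ₁ < ⋯ < λₙ and let Λ be the lattice of slowly growing tuples (μ ∈ ℕⁿ with 0 ≤ μ_i − μ_{i−1} ≤ λ_i − λ_{i−1}, μ₀ = λ₀ = 0). Let P = {(i,j) : j ∈ [n], i ∈ [λ_j]}, ordered by (i,j) ≤ (i′,j′) iff i ≤ i′ and λ_j − i ≥ λ_{j′} − i′. For (i,j) ∈ P define μ(i,j) ∈ ℕⁿ by μ(i,j)_k = max(λ_k − (λ_j − i), 0) for k < j and μ(i,j)_k = i for k ≥ j. Then the map (i,j) ↦ μ(i,j) is an embedding of ordered sets from P into Λ. -/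
/-- The tuple `μ(i,j)` associated to `(i,j) ∈ P`: `μ(i,j)_k = lam k ∸ (lam j − i)` for `k < j`,
and `μ(i,j)_k = i` for `k ≥ j`. -/
def muPP (lam : ℕ → ℕ) (i j k : ℕ) : ℕ := if k < j then lam k - (lam j - i) else i

theorem stmt12 (n : ℕ) (lam : ℕ → ℕ) (hlam0 : lam 0 = 0)
    (hlam : ∀ k < n, lam k < lam (k + 1)) :
    (∀ i j, 1 ≤ j → j ≤ n → 1 ≤ i → i ≤ lam j →
      muPP lam i j 0 = 0 ∧ ∀ k < n, muPP lam i j k ≤ muPP lam i j (k + 1) ∧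
        muPP lam i j (k + 1) - muPP lam i j k ≤ lam (k + 1) - lam k) ∧
    (∀ i j i' j', 1 ≤ j → j ≤ n → 1 ≤ i → i ≤ lam j →
      1 ≤ j' → j' ≤ n → 1 ≤ i' → i' ≤ lam j' →
      ((i ≤ i' ∧ lam j' - i' ≤ lam j - i) ↔
        ∀ k, 1 ≤ k → k ≤ n → muPP lam i j k ≤ muPP lam i' j' k)) := by
  have mono : ∀ a b, a ≤ b → b ≤ n → lam a ≤ lam b := by
    intro a b hab hbn
    induction b with
    | zero =>
      obtain rfl : a = 0 := by omega
      exact le_refl _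
    | succ b ih =>
      rcases Nat.lt_or_ge a (b + 1) with h | h
      · exact le_trans (ih (by omega) (by omega)) (le_of_lt (hlam b (by omega)))
      · obtain rfl : a = b + 1 := by omega
        exact le_refl _
  constructor
  · intro i j hj1 hjn hi1 hij
    constructor
    · unfold muPP
      rw [if_pos (by omega)]
      omega
    · intro k hk
      have hk1 : lam k < lam (k + 1) := hlam k hk
      unfold muPP
      split_ifs with h1 h2 h2
      · omega
      · have hj : j = k + 1 := by omega
        subst hj
        omega
      · omega
      · omega
  · intro i j i' j' hj1 hjn hi1 hij hj'1 hj'n hi'1 hij'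
    constructor
    · rintro ⟨hii, hd⟩ k hk1 hkn
      unfold muPP
      split_ifs with h1 h2 h2
      · omega
      · have := mono k j (le_of_lt h1) hjn
        omega
      · have := mono j k (by omega) hkn
        omega
      · omega
    · intro h
      have hj := h j hj1 hjn
      have hj' := h j' hj'1 hj'n
      unfold muPP at hj hj'
      rw [if_neg (lt_irrefl j)] at hj
      rw [if_neg (lt_irrefl j')] at hj'
      have hmjj' : j ≤ j' → lam j ≤ lam j' := fun hh => mono j j' hh hj'n
      have hmj'j : j' ≤ j → lam j' ≤ lam j := fun hh => mono j' j hh hjn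
      rcases Nat.lt_trichotomy j j' with hlt | heq | hgt
      · rw [if_pos hlt] at hj
        rw [if_neg (by omega)] at hj'
        have := hmjj' (le_of_lt hlt)
        omega
      · subst heq
        rw [if_neg (lt_irrefl j)] at hj hj'
        omega
      · rw [if_neg (by omega)] at hj
        rw [if_pos hgt] at hj'
        have := hmj'j (le_of_lt hgt)
        omega
end

section
/- With notation as above (0 < λ₁ < ⋯ < λₙ, Λ the lattice of slowly growing tuples, P the ordered set of pairs, μ(i,j) as defined), the set of join-irreducible elements of Λ is exactly {μ(i,j) : (i,j) ∈ P}. -/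
/-- `μ` is a slowly growing tuple relative to `lam` (in coordinates `0,…,n`, with `μ 0 = 0`). -/
def SlowGrow (n : ℕ) (lam μ : ℕ → ℕ) : Prop :=
  μ 0 = 0 ∧ ∀ k < n, μ k ≤ μ (k + 1) ∧ μ (k + 1) - μ k ≤ lam (k + 1) - lam k

private lemma mono_of_step {n : ℕ} {f : ℕ → ℕ} (h : ∀ k < n, f k ≤ f (k + 1)) :
    ∀ {k m : ℕ}, k ≤ m → m ≤ n → f k ≤ f m := by
  intro k m
  induction m with
  | zero => intro hkm _; obtain rfl := Nat.le_zero.mp hkm; exact le_rfl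
  | succ m ih =>
    intro hkm hmn
    rcases Nat.lt_or_ge k (m + 1) with h' | h'
    · exact le_trans (ih (by omega) (by omega)) (h m (by omega))
    · obtain rfl : k = m + 1 := by omega
      exact le_rfl

private lemma sg_diff {n : ℕ} {lam μ : ℕ → ℕ} (hlam : ∀ k < n, lam k < lam (k + 1))
    (hμ : SlowGrow n lam μ) :
    ∀ {k m : ℕ}, k ≤ m → m ≤ n → μ m + lam k ≤ μ k + lam m := by
  intro k m
  induction m with
  | zero => intro hkm _; obtain rfl := Nat.le_zero.mp hkm; omega
  | succ m ih =>
    intro hkm hmn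
    rcases Nat.lt_or_ge k (m + 1) with h' | h'
    · have h1 := ih (by omega) (by omega)
      have h2 := hμ.2 m (by omega)
      have h3 := hlam m (by omega)
      omega
    · obtain rfl : k = m + 1 := by omega
      omega

private lemma sg_muPP {n : ℕ} {lam : ℕ → ℕ} (hlam0 : lam 0 = 0)
    (hlam : ∀ k < n, lam k < lam (k + 1)) {i j : ℕ} (hj1 : 1 ≤ j) (hjn : j ≤ n)
    (hi : i ≤ lam j) : SlowGrow n lam (muPP lam i j) := by
  constructor
  · have h0 : 0 < j := hj1
    simp [muPP, h0, hlam0]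
  · intro k hk
    have hstep := hlam k hk
    rcases Nat.lt_trichotomy (k + 1) j with h | h | h
    · have hk' : k < j := by omega
      have hj' : lam (k + 1) ≤ lam j :=
        mono_of_step (fun m hm => le_of_lt (hlam m hm)) (by omega) (by omega)
      simp only [muPP, if_pos h, if_pos hk']
      omega
    · subst h
      simp only [muPP, if_pos (by omega : k < k + 1), if_neg (by omega : ¬ k + 1 < k + 1)]
      omega
    · simp only [muPP, if_neg (by omega : ¬ k < j), if_neg (by omega : ¬ k + 1 < j)]
      omega

private lemma eq_of_le_mu {n : ℕ} {lam ν : ℕ → ℕ} (hlam : ∀ k < n, lam k < lam (k + 1))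
    (hν : SlowGrow n lam ν) {i j : ℕ} (hjn : j ≤ n) (hi : i ≤ lam j)
    (hle : ∀ k ≤ n, ν k ≤ muPP lam i j k) (hj : ν j = i) :
    ∀ k ≤ n, ν k = muPP lam i j k := by
  intro k hk
  rcases Nat.lt_or_ge k j with h | h
  · have h1 := sg_diff hlam hν (le_of_lt h) hjn
    have h2 := hle k hk
    simp only [muPP, if_pos h] at h2 ⊢
    omega
  · have h1 : ν j ≤ ν k := mono_of_step (fun m hm => (hν.2 m hm).1) h hk
    have h2 := hle k hk
    simp only [muPP, if_neg (Nat.not_lt.mpr h)] at h2 ⊢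
    omega

theorem stmt13 (n : ℕ) (lam : ℕ → ℕ) (hlam0 : lam 0 = 0)
    (hlam : ∀ k < n, lam k < lam (k + 1)) (μ : ℕ → ℕ) (hμ : SlowGrow n lam μ) :
    ((∃ k ≤ n, μ k ≠ 0) ∧
      ∀ ν ρ, SlowGrow n lam ν → SlowGrow n lam ρ →
        (∀ k ≤ n, μ k = max (ν k) (ρ k)) →
        (∀ k ≤ n, μ k = ν k) ∨ (∀ k ≤ n, μ k = ρ k)) ↔
    (∃ i j, 1 ≤ j ∧ j ≤ n ∧ 1 ≤ i ∧ i ≤ lam j ∧ ∀ k ≤ n, μ k = muPP lam i j k) := by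
  constructor
  · rintro ⟨⟨k0, hk0n, hk0⟩, hirr⟩
    -- there is an ascent
    have hex : ∃ k, k ≤ n ∧ 0 < k ∧ μ (k - 1) < μ k := by
      by_contra hcon
      push_neg at hcon
      have hzero : ∀ k ≤ n, μ k = 0 := by
        intro k
        induction k with
        | zero => intro _; exact hμ.1
        | succ m ih =>
          intro hm
          have h1 := hcon (m + 1) (by omega) (by omega)
          have h2 := ih (by omega)
          simp only [Nat.add_sub_cancel] at h1
          omega
      exact hk0 (hzero k0 hk0n)
    obtain ⟨a, han, ha0, ha⟩ := hex
    obtain ⟨j, hjn, hj0, hjasc, hmax'⟩ :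
        ∃ j, j ≤ n ∧ 0 < j ∧ μ (j - 1) < μ j ∧ ∀ m, j < m → m ≤ n → μ m ≤ μ (m - 1) := by
      refine ⟨Nat.findGreatest (fun k => 0 < k ∧ μ (k - 1) < μ k) n, Nat.findGreatest_le n,
        (Nat.findGreatest_spec han (P := fun k => 0 < k ∧ μ (k - 1) < μ k) ⟨ha0, ha⟩).1,
        (Nat.findGreatest_spec han (P := fun k => 0 < k ∧ μ (k - 1) < μ k) ⟨ha0, ha⟩).2, ?_⟩
      intro m hm1 hm2
      have h := Nat.findGreatest_is_greatest hm1 hm2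
      push_neg at h
      exact h (by omega)
    have hconst : ∀ m, j ≤ m → m ≤ n → μ m = μ j := by
      intro m
      induction m with
      | zero => intro h1 _; omega
      | succ m ih =>
        intro h1 h2
        rcases Nat.lt_or_ge j (m + 1) with h | h
        · have h3 := hmax' (m + 1) h h2
          simp only [Nat.add_sub_cancel] at h3
          have h4 : μ m ≤ μ (m + 1) := (hμ.2 m (by omega)).1
          have h5 := ih (by omega) (by omega)
          omega
        · obtain rfl : j = m + 1 := by omega
          rfl
    set i := μ j with hidef
    have hi1 : 1 ≤ i := by omega
    have hij : i ≤ lam j := by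
      have := sg_diff hlam hμ (Nat.zero_le j) hjn
      have h0 := hμ.1
      omega
    have hle : ∀ k ≤ n, muPP lam i j k ≤ μ k := by
      intro k hk
      rcases Nat.lt_or_ge k j with h | h
      · simp only [muPP, if_pos h]
        have := sg_diff hlam hμ (le_of_lt h) hjn
        omega
      · simp only [muPP, if_neg (Nat.not_lt.mpr h)]
        have := hconst k h hk
        omega
    have hρ : SlowGrow n lam (fun k => min (μ k) (μ (j - 1))) := by
      constructor
      · have h0 := hμ.1
        simp [h0]
      · intro k hk
        have := hμ.2 k hk
        constructor <;> simp only [] <;> omega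
    have hmaxeq : ∀ k ≤ n, μ k = max (muPP lam i j k) (min (μ k) (μ (j - 1))) := by
      intro k hk
      rcases Nat.lt_or_ge k j with h | h
      · have h1 := hle k hk
        have h2 : μ k ≤ μ (j - 1) :=
          mono_of_step (fun m hm => (hμ.2 m hm).1) (by omega) (by omega)
        omega
      · have h1 := hconst k h hk
        simp only [muPP, if_neg (Nat.not_lt.mpr h)]
        omega
    rcases hirr (muPP lam i j) (fun k => min (μ k) (μ (j - 1)))
        (sg_muPP hlam0 hlam hj0 hjn hij) hρ hmaxeq with hcase | hcase
    · exact ⟨i, j, hj0, hjn, hi1, hij, hcase⟩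
    · have := hcase j hjn
      omega
  · rintro ⟨i, j, hj1, hjn, hi1, hij, hmu⟩
    constructor
    · refine ⟨j, hjn, ?_⟩
      rw [hmu j hjn]
      simp only [muPP, if_neg (lt_irrefl j)]
      omega
    · intro ν ρ hν hρ hmax
      have hνle : ∀ k ≤ n, ν k ≤ muPP lam i j k := by
        intro k hk
        have h := hmax k hk
        rw [hmu k hk] at h
        omega
      have hρle : ∀ k ≤ n, ρ k ≤ muPP lam i j k := by
        intro k hk
        have h := hmax k hk
        rw [hmu k hk] at h
        omega
      have hj := hmax j hjn
      rw [hmu j hjn] at hj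
      have hjj : muPP lam i j j = i := by simp [muPP]
      have hor : ν j = i ∨ ρ j = i := by
        have h1 := hνle j hjn
        have h2 := hρle j hjn
        omega
      rcases hor with hc | hc
      · left
        intro k hk
        rw [hmu k hk]
        exact (eq_of_le_mu hlam hν hjn hij hνle hc k hk).symm
      · right
        intro k hk
        rw [hmu k hk]
        exact (eq_of_le_mu hlam hρ hjn hij hρle hc k hk).symm
end

section
/- Fix integers 0 < λ₁ < ⋯ < λₙ and let d = d(λ₁,…,λₙ) with index sequence 1 = j(1) < ⋯ < j(d) as in the definition of d. In the ordered set P = {(i,j) : j ∈ [n], i ∈ [λ_j]} with (i,j) ≤ (i′,j′) iff i ≤ i′ and λ_j − i ≥ λ_{j′} − i′, the elements (1, j(1)), (2, j(2)), …, (d, j(d)) form an antichain; consequently the width of P is at least d. -/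
theorem stmt14 (n : ℕ) (lam : ℕ → ℕ) (hlam0 : lam 0 = 0)
    (hlam : ∀ k < n, lam k < lam (k + 1))
    (d : ℕ) (hd : 1 ≤ d) (j : ℕ → ℕ) (hj1 : j 1 = 1) (hjn : j d ≤ n)
    (hrec : ∀ k, 1 ≤ k → k < d →
      j (k + 1) = if 1 < lam (j k + 1) - lam (j k) then j k + 1 else j k + 2) :
    (∀ k, 1 ≤ k → k ≤ d → 1 ≤ j k ∧ j k ≤ n ∧ 1 ≤ k ∧ k ≤ lam (j k)) ∧
    (∀ k l, 1 ≤ k → k ≤ d → 1 ≤ l → l ≤ d → k ≠ l →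
      ¬ (k ≤ l ∧ lam (j l) - l ≤ lam (j k) - k)) := by
  -- step bound: j (k+1) ≥ j k + 1
  have hstep : ∀ k, 1 ≤ k → k < d → j k + 1 ≤ j (k + 1) := by
    intro k hk hkd
    rw [hrec k hk hkd]
    split <;> omega
  -- monotonicity chain for j
  have hjmono : ∀ l, l ≤ d → ∀ k, 1 ≤ k → k ≤ l → j k + (l - k) ≤ j l := by
    intro l
    induction l with
    | zero => intro _ k hk hkl; omega
    | succ m ih =>
      intro hld k hk hkl
      rcases Nat.lt_or_ge k (m + 1) with h | h
      · have h1 : 1 ≤ m := by omega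
        have := ih (by omega) k hk (by omega)
        have := hstep m h1 (by omega)
        omega
      · have : k = m + 1 := by omega
        subst this; omega
  have hjn' : ∀ k, 1 ≤ k → k ≤ d → j k ≤ n := by
    intro k hk hkd
    have := hjmono d le_rfl k hk hkd
    omega
  have hjge : ∀ k, 1 ≤ k → k ≤ d → k ≤ j k := by
    intro k hk hkd
    have := hjmono k hkd 1 le_rfl hk
    omega
  -- gap: lam (j (k+1)) ≥ lam (j k) + 2
  have hgap : ∀ k, 1 ≤ k → k < d → lam (j k) + 2 ≤ lam (j (k + 1)) := by
    intro k hk hkd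
    have hjk1 : j (k + 1) ≤ n := hjn' (k + 1) (by omega) (by omega)
    have hr := hrec k hk hkd
    by_cases hc : 1 < lam (j k + 1) - lam (j k)
    · rw [if_pos hc] at hr
      rw [hr]; omega
    · rw [if_neg hc] at hr
      have h1 : j k + 1 < n := by omega
      have h2 := hlam (j k) (by omega)
      have h3 := hlam (j k + 1) h1
      have h4 : j k + 1 + 1 = j k + 2 := rfl
      rw [h4] at h3
      rw [hr]
      omega
  -- chain for lam
  have hchain : ∀ l, l ≤ d → ∀ k, 1 ≤ k → k ≤ l → lam (j k) + 2 * (l - k) ≤ lam (j l) := by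
    intro l
    induction l with
    | zero => intro _ k hk hkl; omega
    | succ m ih =>
      intro hld k hk hkl
      rcases Nat.lt_or_ge k (m + 1) with h | h
      · have h1 : 1 ≤ m := by omega
        have := ih (by omega) k hk (by omega)
        have := hgap m h1 (by omega)
        omega
      · have : k = m + 1 := by omega
        subst this; omega
  have hn1 : 0 < n := by
    have := hjge d hd le_rfl
    omega
  have hlam1 : 1 ≤ lam 1 := by
    have := hlam 0 hn1
    norm_num at this
    omega
  have hlk : ∀ k, 1 ≤ k → k ≤ d → k ≤ lam (j k) := by
    intro k hk hkd
    have := hchain k hkd 1 le_rfl hk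
    rw [hj1] at this
    omega
  refine ⟨fun k hk hkd => ⟨by have := hjge k hk hkd; omega, hjn' k hk hkd, hk, hlk k hk hkd⟩,
    fun k l hk hkd hl hld hne ⟨hkl, hle⟩ => ?_⟩
  have hklt : k < l := by omega
  have h1 := hchain l hld k hk (by omega)
  have h2 := hlk k hk hkd
  omega
end

section
/- Let R be a discrete valuation ring with uniformizer π, and let a₁,…,aₙ, b₁,…,bₙ ∈ Rᵐ. Then there exist indices i₁,…,i_r, j₁,…,j_s ∈ [n] with r + s ≤ m and an integer e ≥ 0 such that: (1) a_{i₁},…,a_{i_r} generate the R-submodule N = Ra₁ + ⋯ + Raₙ of Rᵐ; and (2) for each i ∈ [n], πᵉ b_i ∈ N + Rπᵉb_{j₁} + ⋯ + Rπᵉb_{j_s}. -/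
/-!
Let e be such that πᵉ kills the torsion of V = Rᵐ ⧸ N. Over a local Bézout domain, a nontrivial
relation among elements whose span meets the torsion trivially can be divided by the gcd of its
coefficients, leaving a relation with a unit coefficient, so one element is redundant. Discarding
redundant elements thus ends in a linearly independent subfamily with the same span. Applied to
the aᵢ in Rᵐ, and to the classes of the πᵉbᵢ in V (whose span meets the torsion trivially), this
gives r independent aᵢ generating N and s elements πᵉbⱼ independent modulo N, so r + s ≤ m.
-/

open Submodule Set

section

variable {R M : Type*} [AddCommGroup M]

theorem span_range_comp_succAbove_eq [Ring R] [Module R M] {k : ℕ} {u : Fin (k + 1) → M}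
    {c : Fin (k + 1) → R} (hsum : ∑ i, c i • u i = 0) {l : Fin (k + 1)} (hl : IsUnit (c l)) :
    span R (range (u ∘ l.succAbove)) = span R (range u) := by
  refine le_antisymm (span_mono (range_comp_subset_range _ _)) (span_le.mpr ?_)
  rintro _ ⟨j, rfl⟩
  rcases Fin.eq_self_or_eq_succAbove l j with rfl | ⟨i, rfl⟩
  · rw [Fin.sum_univ_succAbove _ j, add_eq_zero_iff_eq_neg] at hsum
    have hu : u j = hl.unit⁻¹ • -∑ i, c (j.succAbove i) • u (j.succAbove i) := by
      rw [← hsum]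
      exact (inv_smul_smul hl.unit (u j)).symm
    rw [hu]
    exact smul_mem _ _ (neg_mem (sum_mem fun i _ => smul_mem _ _ (subset_span ⟨i, rfl⟩)))
  · exact subset_span ⟨i, rfl⟩

variable [CommRing R] [IsDomain R] [Module R M]

theorem exists_eq_smul_isUnit_apply [IsLocalRing R] [IsBezout R] {ι : Type*} [Fintype ι]
    {c : ι → R} (hc : c ≠ 0) : ∃ g : R, g ≠ 0 ∧ ∃ c' : ι → R, c = g • c' ∧ ∃ l, IsUnit (c' l) := by
  obtain ⟨g, hJ⟩ := (IsBezout.isPrincipal_of_FG _ (fg_span (finite_range c))).principal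
  have hmem (i : ι) : c i ∈ Ideal.span {g} := by
    rw [← Ideal.submodule_span_eq, ← hJ]; exact subset_span (mem_range_self i)
  choose c' hc' using fun i => Ideal.mem_span_singleton'.mp (hmem i)
  have hcg : c = g • c' := funext fun i => (hc' i).symm.trans (mul_comm _ _)
  have hg : g ≠ 0 := fun hg => hc (by simp [hcg, hg])
  obtain ⟨d, hd⟩ := (mem_span_range_iff_exists_fun R).mp (hJ ▸ mem_span_singleton_self g)
  have hdc' : ∑ i, d i * c' i = 1 := by
    refine mul_right_cancel₀ hg ?_
    conv_rhs => rw [one_mul, ← hd]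
    rw [Finset.sum_mul]
    refine Finset.sum_congr rfl fun i _ => ?_
    rw [← hc' i, smul_eq_mul, mul_assoc]
  obtain ⟨l, hl⟩ : ∃ l, IsUnit (c' l) := by
    by_contra! h
    have : ∑ i, d i * c' i ∈ IsLocalRing.maximalIdeal R :=
      sum_mem fun i _ => Ideal.mul_mem_left _ _ ((IsLocalRing.mem_maximalIdeal _).mpr (h i))
    exact (IsLocalRing.mem_maximalIdeal _).mp (hdc' ▸ this) isUnit_one
  exact ⟨g, hg, c', hcg, l, hl⟩

theorem exists_sum_smul_eq_zero_isUnit_of_disjoint_torsion [IsLocalRing R] [IsBezout R]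
    {ι : Type*} [Fintype ι] {u : ι → M} (htf : Disjoint (span R (range u)) (torsion R M))
    {c : ι → R} (hsum : ∑ i, c i • u i = 0) (hc : c ≠ 0) :
    ∃ c' : ι → R, ∑ i, c' i • u i = 0 ∧ ∃ l, IsUnit (c' l) := by
  obtain ⟨g, hg, c', rfl, l, hl⟩ := exists_eq_smul_isUnit_apply hc
  refine ⟨c', disjoint_def.mp htf _ (sum_mem fun i _ => smul_mem _ _ (subset_span ⟨i, rfl⟩))
    ((mem_torsion_iff _).mpr ⟨⟨g, mem_nonZeroDivisors_of_ne_zero hg⟩, ?_⟩), l, hl⟩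
  simpa [Finset.smul_sum, smul_smul] using hsum

theorem exists_linearIndependent_comp_span_eq [IsLocalRing R] [IsBezout R] {n : ℕ}
    (u : Fin n → M) (htf : Disjoint (span R (range u)) (torsion R M)) :
    ∃ (r : ℕ) (σ : Fin r → Fin n),
      LinearIndependent R (u ∘ σ) ∧ span R (range (u ∘ σ)) = span R (range u) := by
  induction n with
  | zero => exact ⟨0, id, linearIndependent_empty_type, rfl⟩
  | succ k ih =>
    by_cases hu : LinearIndependent R u
    · exact ⟨_, id, hu, rfl⟩
    obtain ⟨c, hsum, i, hi⟩ := Fintype.not_linearIndependent_iff.mp hu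
    obtain ⟨c', hsum', l, hl⟩ :=
      exists_sum_smul_eq_zero_isUnit_of_disjoint_torsion htf hsum (ne_of_apply_ne (· i) hi)
    have hspan := span_range_comp_succAbove_eq hsum' hl
    obtain ⟨r, σ, hσ, hσspan⟩ := ih (u ∘ l.succAbove) (hspan ▸ htf)
    exact ⟨r, l.succAbove ∘ σ, hσ, hσspan.trans hspan⟩

theorem disjoint_span_range_smul_torsion {ι : Type*} [Fintype ι] {c : R} (hc : c ≠ 0)
    (hkill : ∀ x ∈ torsion R M, c • x = 0) (u : ι → M) :
    Disjoint (span R (range fun i => c • u i)) (torsion R M) := by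
  refine disjoint_def.mpr fun x hx hxt => ?_
  obtain ⟨d, rfl⟩ := (mem_span_range_iff_exists_fun R).mp hx
  simp_rw [smul_comm _ c, ← Finset.smul_sum] at hxt ⊢
  refine hkill _ ((mem_torsion_iff _).mpr ?_)
  obtain ⟨a, ha⟩ := (mem_torsion_iff _).mp hxt
  exact ⟨a * ⟨c, mem_nonZeroDivisors_of_ne_zero hc⟩, by rw [mul_smul]; exact ha⟩

theorem IsDiscreteValuationRing.exists_pow_smul_eq_zero_of_mem_torsion
    [IsDiscreteValuationRing R] {π : R} (hπ : Irreducible π) [Module.Finite R M] :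
    ∃ e : ℕ, ∀ x ∈ torsion R M, π ^ e • x = 0 := by
  obtain ⟨c, hc, hc0⟩ :=
    annihilator_top_inter_nonZeroDivisors (torsion_isTorsion (R := R) (M := M))
  obtain ⟨e, v, rfl⟩ := eq_unit_mul_pow_irreducible (nonZeroDivisors.ne_zero hc0) hπ
  refine ⟨e, fun x hx => ?_⟩
  have := congrArg Subtype.val (mem_annihilator.mp hc ⟨x, hx⟩ mem_top)
  rw [coe_smul, mul_smul] at this
  exact v.isUnit.smul_eq_zero.mp this

end

theorem stmt16 {R : Type*} [CommRing R] [IsDomain R] [IsDiscreteValuationRing R]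
    (π : R) (hπ : Irreducible π) (m n : ℕ) (a b : Fin n → (Fin m → R)) :
    ∃ (r s : ℕ) (ii : Fin r → Fin n) (jj : Fin s → Fin n) (e : ℕ),
      r + s ≤ m ∧
      Submodule.span R (Set.range (a ∘ ii)) = Submodule.span R (Set.range a) ∧
      ∀ i : Fin n, (π ^ e) • b i ∈
        Submodule.span R (Set.range a) ⊔
          Submodule.span R (Set.range fun l => (π ^ e) • b (jj l)) := by
  set N := span R (range a)
  have hfree : torsion R (Fin m → R) = ⊥ := isTorsionFree_iff_torsion_eq_bot.mp inferInstance
  obtain ⟨r, ii, hai, haspan⟩ :=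
    exists_linearIndependent_comp_span_eq a (hfree ▸ disjoint_bot_right)
  obtain ⟨e, he⟩ :=
    IsDiscreteValuationRing.exists_pow_smul_eq_zero_of_mem_torsion (M := (Fin m → R) ⧸ N) hπ
  set w : Fin n → (Fin m → R) ⧸ N := fun i => π ^ e • N.mkQ (b i)
  obtain ⟨s, jj, hwi, hwspan⟩ := exists_linearIndependent_comp_span_eq w
    (disjoint_span_range_smul_torsion (pow_ne_zero e hπ.ne_zero) he _)
  refine ⟨r, s, ii, jj, e, ?_, haspan, fun i => ?_⟩
  · have hind := LinearIndependent.sumElim_of_quotient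
      (f := fun l => (⟨a (ii l), subset_span (mem_range_self _)⟩ : N)) (hai.of_comp N.subtype)
      (fun l => π ^ e • b (jj l)) hwi
    simpa using hind.fintype_card_le_finrank
  · rw [← comap_map_mkQ, mem_comap, map_span, ← range_comp]
    change _ ∈ span R (range (w ∘ jj))
    rw [hwspan]
    exact subset_span ⟨i, (map_smul _ _ _).symm⟩
end

section
/- Let F₀ = F₁ = 1 and F_{n+2} = F_{n+1} + Fₙ be the Fibonacci numbers. Then the set of Fibonacci numbers is a weak Sidon set: if F_a + F_b = F_c + F_d, then F_a = F_b, or F_c = F_d, or {F_a, F_b} = {F_c, F_d}. Moreover, a positive integer a has two essentially distinct representations as a sum of two Fibonacci numbers if and only if a = 2Fₙ for some n ≥ 2, and in that case a = F_{n+1} + F_{n−2} is the only other representation. -/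
/-- The Fibonacci numbers with `F 0 = F 1 = 1` and `F (n+2) = F (n+1) + F n`. -/
def F (n : ℕ) : ℕ := Nat.fib (n + 1)

lemma Fpos (n : ℕ) : 0 < F n := Nat.fib_pos.2 (Nat.succ_pos n)

lemma Fmono {m n : ℕ} (h : m ≤ n) : F m ≤ F n := Nat.fib_mono (by omega)

lemma Fstrict {m n : ℕ} (hm : 1 ≤ m) (h : m < n) : F m < F n := by
  have h1 : F m < F (m + 1) := Nat.fib_lt_fib_succ (by omega)
  have h2 : F (m + 1) ≤ F n := Fmono (by omega)
  omega

lemma Fadd (n : ℕ) : F (n + 2) = F (n + 1) + F n := by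
  show Nat.fib (n + 1 + 2) = Nat.fib (n + 1 + 1) + Nat.fib (n + 1)
  rw [Nat.fib_add_two, Nat.add_comm]

lemma Finj {a b : ℕ} (ha : 1 ≤ a) (hb : 1 ≤ b) (h : F a = F b) : a = b := by
  rcases lt_trichotomy a b with h' | h' | h'
  · exact absurd h (Nat.ne_of_lt (Fstrict ha h'))
  · exact h'
  · exact absurd h.symm (Nat.ne_of_lt (Fstrict hb h'))

lemma Fnorm (a : ℕ) : ∃ a', 1 ≤ a' ∧ F a' = F a := by
  rcases Nat.eq_zero_or_pos a with h | h
  · exact ⟨1, le_refl 1, by simp [h, F]⟩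
  · exact ⟨a, h, rfl⟩

lemma two_F {n : ℕ} (hn : 2 ≤ n) : 2 * F n = F (n + 1) + F (n - 2) := by
  obtain ⟨m, rfl⟩ : ∃ m, n = m + 2 := ⟨n - 2, by omega⟩
  have h1 := Fadd (m + 1)
  have h2 := Fadd m
  simp only [show m + 1 + 1 = m + 2 from rfl] at h1
  simp only [show m + 2 + 1 = m + 1 + 2 from rfl, show m + 2 - 2 = m from by omega]
  omega

lemma sidon' {a b c d : ℕ} (ha : 1 ≤ a) (hab : a ≤ b) (hc : 1 ≤ c)
    (hcd : c ≤ d) (hbd : b ≤ d) (h : F a + F b = F c + F d) :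
    a = b ∨ c = d ∨ (a = c ∧ b = d) := by
  rcases eq_or_lt_of_le hbd with rfl | hlt
  · have hac : F a = F c := by omega
    exact Or.inr (Or.inr ⟨Finj ha hc hac, rfl⟩)
  · by_cases hab' : a = b
    · exact Or.inl hab'
    by_cases hcd' : c = d
    · exact Or.inr (Or.inl hcd')
    exfalso
    have h1 : F (b + 1) ≤ F d := Fmono (by omega)
    have h2 : F (b + 1) = F b + F (b - 1) := by
      have h3 := Fadd (b - 1)
      rw [show b - 1 + 2 = b + 1 from by omega, show b - 1 + 1 = b from by omega] at h3
      exact h3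
    have h3 : F a ≤ F (b - 1) := Fmono (by omega)
    have h4 : 0 < F c := Fpos c
    omega

lemma helper {a b c d : ℕ} (ha : 1 ≤ a) (hab : a ≤ b) (hc : 1 ≤ c)
    (hcd : c ≤ d) (h : F a + F b = F c + F d) :
    F a = F b ∨ F c = F d ∨ ({F a, F b} : Set ℕ) = {F c, F d} := by
  rcases le_total b d with hbd | hdb
  · rcases sidon' ha hab hc hcd hbd h with h' | h' | ⟨h1, h2⟩
    · exact Or.inl (by rw [h'])
    · exact Or.inr (Or.inl (by rw [h']))
    · subst h1; subst h2; exact Or.inr (Or.inr rfl)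
  · rcases sidon' hc hcd ha hab hdb h.symm with h' | h' | ⟨h1, h2⟩
    · exact Or.inr (Or.inl (by rw [h']))
    · exact Or.inl (by rw [h'])
    · subst h1; subst h2; exact Or.inr (Or.inr rfl)

lemma part1 (a b c d : ℕ) (h : F a + F b = F c + F d) :
    F a = F b ∨ F c = F d ∨ ({F a, F b} : Set ℕ) = {F c, F d} := by
  obtain ⟨a', ha', hfa⟩ := Fnorm a
  obtain ⟨b', hb', hfb⟩ := Fnorm b
  obtain ⟨c', hc', hfc⟩ := Fnorm c
  obtain ⟨d', hd', hfd⟩ := Fnorm d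
  rw [← hfa, ← hfb, ← hfc, ← hfd] at h ⊢
  clear hfa hfb hfc hfd
  rcases le_total a' b' with hab | hba
  · rcases le_total c' d' with hcd | hdc
    · exact helper ha' hab hc' hcd h
    · rcases helper ha' hab hd' hdc (by omega) with h' | h' | h'
      · exact Or.inl h'
      · exact Or.inr (Or.inl h'.symm)
      · exact Or.inr (Or.inr (h'.trans (Set.pair_comm (F d') (F c'))))
  · rcases le_total c' d' with hcd | hdc
    · rcases helper hb' hba hc' hcd (by omega) with h' | h' | h'
      · exact Or.inl h'.symm
      · exact Or.inr (Or.inl h')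
      · exact Or.inr (Or.inr ((Set.pair_comm (F a') (F b')).trans h'))
    · rcases helper hb' hba hd' hdc (by omega) with h' | h' | h'
      · exact Or.inl h'.symm
      · exact Or.inr (Or.inl h'.symm)
      · exact Or.inr (Or.inr ((Set.pair_comm (F a') (F b')).trans
          (h'.trans (Set.pair_comm (F d') (F c')))))

lemma part3' {n x y : ℕ} (hn : 2 ≤ n) (hx : 1 ≤ x) (hxy : x ≤ y)
    (h : 2 * F n = F x + F y) :
    (F x = F n ∧ F y = F n) ∨ (F x = F (n - 2) ∧ F y = F (n + 1)) := by
  rcases lt_trichotomy (F y) (F n) with hy | hy | hy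
  · exfalso
    have hx' : F x ≤ F y := Fmono hxy
    omega
  · exact Or.inl ⟨by omega, hy⟩
  · have hny : n < y := by
      by_contra h'
      have : F y ≤ F n := Fmono (by omega)
      omega
    have h1 : F (n + 1) ≤ F y := Fmono (by omega)
    have h2 : F y < F (n + 2) := by
      have hpos := Fpos x
      have h3 := Fadd n
      have h4 : F n ≤ F (n + 1) := Fmono (by omega)
      omega
    have hy' : y = n + 1 := by
      by_contra h'
      have : F (n + 2) ≤ F y := Fmono (by omega)
      omega
    subst hy'
    have h5 := two_F hn
    exact Or.inr ⟨by omega, rfl⟩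

theorem stmt18 :
    (∀ a b c d : ℕ, F a + F b = F c + F d →
      F a = F b ∨ F c = F d ∨ ({F a, F b} : Set ℕ) = {F c, F d}) ∧
    (∀ a : ℕ, 0 < a →
      ((∃ x y x' y' : ℕ, a = F x + F y ∧ a = F x' + F y' ∧
          ({F x, F y} : Set ℕ) ≠ {F x', F y'}) ↔
        ∃ n : ℕ, 2 ≤ n ∧ a = 2 * F n)) ∧
    (∀ n : ℕ, 2 ≤ n → ∀ x y : ℕ, 2 * F n = F x + F y →
      ({F x, F y} : Set ℕ) = {F n} ∨ ({F x, F y} : Set ℕ) = {F (n + 1), F (n - 2)}) := by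
  refine ⟨part1, ?_, ?_⟩
  · intro a ha
    constructor
    · rintro ⟨x, y, x', y', h1, h2, hne⟩
      have hsum : F x + F y = F x' + F y' := by omega
      rcases part1 x y x' y' hsum with hxy | hxy | hxy
      · by_cases hx1 : x ≤ 1
        · exfalso
          have e1 : F x = 1 := by interval_cases x <;> rfl
          have p1 := Fpos x'
          have p2 := Fpos y'
          have e2 : F y = 1 := by omega
          have e3 : F x' = 1 := by omega
          have e4 : F y' = 1 := by omega
          exact hne (by rw [e1, e2, e3, e4])
        · exact ⟨x, by omega, by omega⟩
      · by_cases hx1 : x' ≤ 1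
        · exfalso
          have e1 : F x' = 1 := by interval_cases x' <;> rfl
          have p1 := Fpos x
          have p2 := Fpos y
          have e2 : F y' = 1 := by omega
          have e3 : F x = 1 := by omega
          have e4 : F y = 1 := by omega
          exact hne (by rw [e1, e2, e3, e4])
        · exact ⟨x', by omega, by omega⟩
      · exact absurd hxy hne
    · rintro ⟨n, hn, rfl⟩
      refine ⟨n, n, n + 1, n - 2, by omega, two_F hn, ?_⟩
      intro heq
      have hmem : F (n + 1) ∈ ({F n, F n} : Set ℕ) := by
        rw [heq]; left; rfl
      have : F (n + 1) = F n := by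
        rcases hmem with h | h
        · exact h
        · exact h
      have := Fstrict (show 1 ≤ n by omega) (show n < n + 1 by omega)
      omega
  · intro n hn x y h
    obtain ⟨x', hx', hfx⟩ := Fnorm x
    obtain ⟨y', hy', hfy⟩ := Fnorm y
    rw [← hfx, ← hfy] at h ⊢
    rcases le_total x' y' with hxy | hyx
    · rcases part3' hn hx' hxy h with ⟨e1, e2⟩ | ⟨e1, e2⟩
      · left; rw [e1, e2]; simp
      · right; rw [e1, e2]; exact Set.pair_comm _ _
    · rcases part3' hn hy' hyx (by omega) with ⟨e1, e2⟩ | ⟨e1, e2⟩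
      · left; rw [e1, e2]; simp
      · right; rw [e1, e2]
end
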